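/- Fix x_f > 0 and γ ∈ (1,3). Then P(x_f,σ,γ) → 0 as σ → 0⁺ and as σ → ∞, and the map σ ↦ P(x_f,σ,γ) attains a unique global maximum on (0,∞) at σ* = t·x_f, where t is the unique positive solution of γ = 1 + 1/(t²(exp(1/(2t²)) − 1)). -/

import Mathlib

open Real Set Filter Topology

/-!
Put `u = x_f² / (2σ²)`. The derivative of `σ ↦ P x_f σ γ` is a positive multiple of
`(γ - 1)(eᵘ - 1) - 2u = (γ - 1) u (F u - F u*)`, where `F u = (eᵘ - 1) / u` is strictly
increasing (a secant slope of the strictly convex exponential) and `u* = 1 / (2t²)` is the value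
of `u` at `σ = t x_f`, at which the defining equation of `t` reads `(γ - 1) F u* = 2`.
So `P` increases up to `t x_f` and decreases after it. The limits follow from
`0 ≤ P ≤ C σ^(γ-1)` and, since `1 - e⁻ᵘ ≤ u`, from `P ≤ C' σ^(γ-3)`.
-/

/-- Filter response of the γ-normalized first-order Gaussian derivative for a
rectangular feature of width `x_f` (closed form). -/
noncomputable def P (xf σ γ : ℝ) : ℝ :=
  (4 * σ ^ (γ - 1) / Real.sqrt (2 * Real.pi)) *
    (1 - Real.exp (-xf ^ 2 / (2 * σ ^ 2)))

theorem strictMonoOn_exp_sub_one_div : StrictMonoOn (fun x => (exp x - 1) / x) (Ioi 0) :=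
  fun x hx y hy hxy => by
    simpa using strictConvexOn_exp.secant_strict_mono (a := 0) trivial trivial trivial
      hx.ne' hy.ne' hxy

theorem mul_exp_sub_one_sub_mul_eq {a b u v : ℝ} (hu : u ≠ 0) (hv : v ≠ 0)
    (hv_eq : a * (exp v - 1) = b * v) :
    a * (exp u - 1) - b * u = a * u * ((exp u - 1) / u - (exp v - 1) / v) := by
  have hb : b = a * ((exp v - 1) / v) := by field_simp; linarith
  subst hb
  field_simp

theorem mul_exp_sub_one_sub_mul_pos_iff {a b u v : ℝ} (ha : 0 < a) (hu : 0 < u) (hv : 0 < v)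
    (hv_eq : a * (exp v - 1) = b * v) : 0 < a * (exp u - 1) - b * u ↔ v < u := by
  rw [mul_exp_sub_one_sub_mul_eq hu.ne' hv.ne' hv_eq, mul_pos_iff_of_pos_left (mul_pos ha hu),
    sub_pos, strictMonoOn_exp_sub_one_div.lt_iff_lt hv hu]

theorem mul_exp_sub_one_sub_mul_neg_iff {a b u v : ℝ} (ha : 0 < a) (hu : 0 < u) (hv : 0 < v)
    (hv_eq : a * (exp v - 1) = b * v) : a * (exp u - 1) - b * u < 0 ↔ u < v := by
  rw [mul_exp_sub_one_sub_mul_eq hu.ne' hv.ne' hv_eq, ← neg_pos, ← mul_neg,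
    mul_pos_iff_of_pos_left (mul_pos ha hu), neg_sub, sub_pos,
    strictMonoOn_exp_sub_one_div.lt_iff_lt hu hv]

theorem lt_of_hasDerivAt_pos_of_neg {f f' : ℝ → ℝ} {a b x : ℝ}
    (hf : ∀ y ∈ Ioi b, HasDerivAt f (f' y) y) (hpos : ∀ y ∈ Ioo b a, 0 < f' y)
    (hneg : ∀ y ∈ Ioi a, f' y < 0) (hab : b < a) (hx : b < x) (hxa : x ≠ a) : f x < f a := by
  have hcont : ContinuousOn f (Ioi b) := fun y hy => (hf y hy).continuousAt.continuousWithinAt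
  rcases hxa.lt_or_gt with hxa | hxa
  · refine strictMonoOn_of_hasDerivWithinAt_pos (f' := f') (convex_Ioc b a)
      (hcont.mono Ioc_subset_Ioi_self) (fun y hy => ?_) (fun y hy => ?_) ⟨hx, hxa.le⟩
      ⟨hab, le_rfl⟩ hxa
    all_goals rw [interior_Ioc] at hy
    · exact (hf y hy.1).hasDerivWithinAt
    · exact hpos y hy
  · refine strictAntiOn_of_hasDerivWithinAt_neg (f' := f') (convex_Ici a)
      (hcont.mono (Ici_subset_Ioi.2 hab)) (fun y hy => ?_) (fun y hy => ?_) self_mem_Ici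
      hxa.le hxa
    all_goals rw [interior_Ici] at hy
    · exact (hf y (hab.trans hy)).hasDerivWithinAt
    · exact hneg y hy

theorem hasDerivAt_P (xf γ : ℝ) {σ : ℝ} (hσ : 0 < σ) :
    HasDerivAt (fun s => P xf s γ)
      (4 / √(2 * π) * σ ^ (γ - 2) * exp (-(xf ^ 2 / (2 * σ ^ 2))) *
        ((γ - 1) * (exp (xf ^ 2 / (2 * σ ^ 2)) - 1) - 2 * (xf ^ 2 / (2 * σ ^ 2)))) σ := by
  have hpow := hasDerivAt_rpow_const (p := γ - 1) (Or.inl hσ.ne')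
  have hexp := ((hasDerivAt_const σ (-xf ^ 2)).div ((hasDerivAt_pow 2 σ).const_mul 2)
    (by positivity)).exp
  refine (((hpow.const_mul 4).div_const (√(2 * π))).mul (hexp.const_sub 1)).congr_deriv ?_
  rw [show γ - 2 = γ - 1 - 1 by ring, rpow_sub_one hσ.ne']
  simp only [Pi.div_apply, neg_div, exp_neg]
  field_simp
  ring

theorem P_nonneg (xf γ : ℝ) {σ : ℝ} (hσ : 0 ≤ σ) : 0 ≤ P xf σ γ := by
  have hexp : exp (-xf ^ 2 / (2 * σ ^ 2)) ≤ 1 :=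
    exp_le_one_iff.2 (by rw [neg_div, neg_nonpos]; positivity)
  have := rpow_nonneg hσ (γ - 1)
  exact mul_nonneg (by positivity) (sub_nonneg.2 hexp)

theorem P_le_rpow (xf γ : ℝ) {σ : ℝ} (hσ : 0 ≤ σ) : P xf σ γ ≤ 4 * σ ^ (γ - 1) / √(2 * π) := by
  have := rpow_nonneg hσ (γ - 1)
  exact mul_le_of_le_one_right (by positivity) (by linarith [exp_pos (-xf ^ 2 / (2 * σ ^ 2))])

theorem P_le_rpow_sub_three (xf γ : ℝ) {σ : ℝ} (hσ : 0 < σ) :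
    P xf σ γ ≤ 2 * xf ^ 2 / √(2 * π) * σ ^ (γ - 3) := by
  have hexp : 1 - exp (-xf ^ 2 / (2 * σ ^ 2)) ≤ xf ^ 2 / (2 * σ ^ 2) := by
    linarith [add_one_le_exp (-xf ^ 2 / (2 * σ ^ 2)), neg_div (2 * σ ^ 2) (xf ^ 2)]
  have hpow : σ ^ (γ - 1) = σ ^ (γ - 3) * σ ^ 2 := by
    rw [← rpow_two, ← rpow_add hσ]; ring_nf
  have := rpow_pos_of_pos hσ (γ - 1)
  calc P xf σ γ ≤ 4 * σ ^ (γ - 1) / √(2 * π) * (xf ^ 2 / (2 * σ ^ 2)) :=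
        mul_le_mul_of_nonneg_left hexp (by positivity)
    _ = 2 * xf ^ 2 / √(2 * π) * σ ^ (γ - 3) := by
        rw [hpow]; field_simp; ring

theorem tendsto_P_nhdsGT_zero (xf : ℝ) {γ : ℝ} (hγ : 1 < γ) :
    Tendsto (fun σ => P xf σ γ) (𝓝[>] 0) (𝓝 0) := by
  have hlim : Tendsto (fun σ : ℝ => 4 * σ ^ (γ - 1) / √(2 * π)) (𝓝[>] 0) (𝓝 0) := by
    simpa using ((tendsto_id.rpow_const_nhds_zero (sub_pos.2 hγ)).const_mul 4).div_const
      (√(2 * π)) |>.mono_left nhdsWithin_le_nhds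
  exact squeeze_zero' (eventually_nhdsWithin_of_forall fun σ hσ => P_nonneg xf γ (le_of_lt hσ))
    (eventually_nhdsWithin_of_forall fun σ hσ => P_le_rpow xf γ (le_of_lt hσ)) hlim

theorem tendsto_P_atTop (xf : ℝ) {γ : ℝ} (hγ : γ < 3) :
    Tendsto (fun σ => P xf σ γ) atTop (𝓝 0) := by
  have hlim : Tendsto (fun σ : ℝ => 2 * xf ^ 2 / √(2 * π) * σ ^ (γ - 3)) atTop (𝓝 0) := by
    simpa [neg_sub] using (tendsto_rpow_neg_atTop (sub_pos.2 hγ)).const_mul (2 * xf ^ 2 / √(2 * π))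
  exact squeeze_zero' ((eventually_gt_atTop 0).mono fun σ hσ => P_nonneg xf γ hσ.le)
    ((eventually_gt_atTop 0).mono fun σ hσ => P_le_rpow_sub_three xf γ hσ) hlim

theorem sub_one_mul_exp_sub_one_eq {γ t : ℝ} (ht : 0 < t)
    (hteq : γ = 1 + 1 / (t ^ 2 * (exp (1 / (2 * t ^ 2)) - 1))) :
    (γ - 1) * (exp (1 / (2 * t ^ 2)) - 1) = 2 * (1 / (2 * t ^ 2)) := by
  have hE : exp (1 / (2 * t ^ 2)) - 1 ≠ 0 := (sub_pos.2 (one_lt_exp_iff.2 (by positivity))).ne'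
  rw [hteq, add_sub_cancel_left]
  generalize exp (1 / (2 * t ^ 2)) - 1 = E at hE ⊢
  field_simp

theorem P_unique_global_max (xf γ : ℝ) (hxf : 0 < xf) (hγ : γ ∈ Set.Ioo (1 : ℝ) 3)
    (t : ℝ) (ht : 0 < t)
    (hteq : γ = 1 + 1 / (t ^ 2 * (Real.exp (1 / (2 * t ^ 2)) - 1))) :
    Filter.Tendsto (fun σ : ℝ => P xf σ γ) (nhdsWithin 0 (Set.Ioi 0)) (nhds 0) ∧
    Filter.Tendsto (fun σ : ℝ => P xf σ γ) Filter.atTop (nhds 0) ∧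
    (∀ σ : ℝ, 0 < σ → σ ≠ t * xf → P xf σ γ < P xf (t * xf) γ) := by
  obtain ⟨hγ1, hγ3⟩ := hγ
  refine ⟨tendsto_P_nhdsGT_zero xf hγ1, tendsto_P_atTop xf hγ3, fun σ hσ hne => ?_⟩
  have hσ₀ : 0 < t * xf := mul_pos ht hxf
  have hcrit := sub_one_mul_exp_sub_one_eq ht hteq
  rw [show 1 / (2 * t ^ 2) = xf ^ 2 / (2 * (t * xf) ^ 2) by field_simp] at hcrit
  have hanti : StrictAntiOn (fun s => xf ^ 2 / (2 * s ^ 2)) (Ioi 0) :=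
    fun a ha b hb hab => by dsimp only; have := ha.out; gcongr
  refine lt_of_hasDerivAt_pos_of_neg (fun s hs => hasDerivAt_P xf γ hs) (fun s hs => ?_)
    (fun s hs => ?_) hσ₀ hσ hne
  · have hs₀ : 0 < s := hs.1
    have hbracket := (mul_exp_sub_one_sub_mul_pos_iff (sub_pos.2 hγ1) (by positivity) (by positivity)
      hcrit).2 ((hanti.lt_iff_gt hσ₀ hs₀).2 hs.2)
    positivity
  · have hs₀ : 0 < s := hσ₀.trans hs
    have hbracket := (mul_exp_sub_one_sub_mul_neg_iff (sub_pos.2 hγ1) (by positivity) (by positivity)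
      hcrit).2 ((hanti.lt_iff_gt hs₀ hσ₀).2 hs)
    exact mul_neg_of_pos_of_neg (by positivity) hbracket
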